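/- arXiv:1312.2991 — 4 statements merged into one kernel-verified Lean document; each statement's English description precedes it below -/
import Mathlib

section
/- Let D be a nonempty connected open subset of ℂ, let Q be an analytic function on D, and let y₁, y₂ be analytic functions on D satisfying y₁'' + Q y₁ = 0 and y₂'' + Q y₂ = 0 on D, whose Wronskian y₁ y₂' − y₁' y₂ is nonzero at some point of D. Then for every z ∈ D with y₂(z) ≠ 0, the Schwarz derivative of y₁/y₂ is defined at z and S(y₁/y₂)(z) = 2 Q(z). -/
/-!
Away from the zeros of `y₂`, the quotient `f = y₁ / y₂` has `f' = -W / y₂²`, where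
`W = y₁ y₂' - y₁' y₂` is the Wronskian. For two solutions of `y'' + Q y = 0` the Wronskian has
derivative `y₁ y₂'' - y₁'' y₂ = 0`, so on the connected domain it is a constant, nonzero since it
is nonzero somewhere. Whenever `f' = c / h²` with `c` constant, `f''/f' = -2 h'/h` and the
Schwarzian collapses to `-2 h''/h`; with `h = y₂` and `y₂'' = -Q y₂` this is `2 Q`.
-/

/-- The Schwarz derivative `S(f) = f'''/f' - (3/2)(f''/f')²`. -/
noncomputable def schwarzian (f : ℂ → ℂ) (z : ℂ) : ℂ :=
  iteratedDeriv 3 f z / deriv f z - (3 / 2) * (iteratedDeriv 2 f z / deriv f z) ^ 2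

open Filter Topology

section Wronskian

variable {𝕜 : Type*} [NontriviallyNormedField 𝕜]

noncomputable def wronskian (y₁ y₂ : 𝕜 → 𝕜) (z : 𝕜) : 𝕜 :=
  y₁ z * deriv y₂ z - deriv y₁ z * y₂ z

theorem hasDerivAt_wronskian {y₁ y₂ : 𝕜 → 𝕜} {z : 𝕜}
    (hy₁ : DifferentiableAt 𝕜 y₁ z) (hy₂ : DifferentiableAt 𝕜 y₂ z)
    (hy₁' : DifferentiableAt 𝕜 (deriv y₁) z) (hy₂' : DifferentiableAt 𝕜 (deriv y₂) z) :
    HasDerivAt (wronskian y₁ y₂)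
      (y₁ z * deriv (deriv y₂) z - deriv (deriv y₁) z * y₂ z) z := by
  refine ((hy₁.hasDerivAt.mul hy₂'.hasDerivAt).sub
    (hy₁'.hasDerivAt.mul hy₂.hasDerivAt)).congr_deriv ?_
  ring

theorem deriv_div_eq_neg_wronskian_div_sq {y₁ y₂ : 𝕜 → 𝕜} {z : 𝕜}
    (hy₁ : DifferentiableAt 𝕜 y₁ z) (hy₂ : DifferentiableAt 𝕜 y₂ z) (hz : y₂ z ≠ 0) :
    deriv (fun w => y₁ w / y₂ w) z = -wronskian y₁ y₂ z / y₂ z ^ 2 := by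
  refine ((hy₁.hasDerivAt.div hy₂.hasDerivAt hz).congr_deriv ?_).deriv
  rw [wronskian]
  ring

end Wronskian

theorem IsOpen.wronskian_eq_of_ode {𝕜 : Type*} [RCLike 𝕜] {D : Set 𝕜} (hDo : IsOpen D)
    (hDc : IsPreconnected D) {Q y₁ y₂ : 𝕜 → 𝕜}
    (hy₁ : DifferentiableOn 𝕜 y₁ D) (hy₂ : DifferentiableOn 𝕜 y₂ D)
    (hy₁' : DifferentiableOn 𝕜 (deriv y₁) D) (hy₂' : DifferentiableOn 𝕜 (deriv y₂) D)
    (hode₁ : ∀ z ∈ D, deriv (deriv y₁) z + Q z * y₁ z = 0)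
    (hode₂ : ∀ z ∈ D, deriv (deriv y₂) z + Q z * y₂ z = 0) {x y : 𝕜} (hx : x ∈ D) (hy : y ∈ D) :
    wronskian y₁ y₂ x = wronskian y₁ y₂ y := by
  have hW : ∀ z ∈ D, HasDerivAt (wronskian y₁ y₂) 0 z := fun z hz => by
    have hDz := hDo.mem_nhds hz
    refine (hasDerivAt_wronskian (hy₁.differentiableAt hDz) (hy₂.differentiableAt hDz)
      (hy₁'.differentiableAt hDz) (hy₂'.differentiableAt hDz)).congr_deriv ?_
    linear_combination y₁ z * hode₂ z hz - y₂ z * hode₁ z hz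
  exact hDo.is_const_of_deriv_eq_zero hDc
    (fun z hz => (hW z hz).differentiableAt.differentiableWithinAt) (fun z hz => (hW z hz).deriv)
    hx hy

theorem schwarzian_eq_of_deriv_eventuallyEq_const_div_sq {f h : ℂ → ℂ} {c z : ℂ}
    (hh : AnalyticAt ℂ h z) (hz : h z ≠ 0) (hc : c ≠ 0)
    (hf : deriv f =ᶠ[𝓝 z] fun w => c / h w ^ 2) :
    schwarzian f z = -2 * deriv (deriv h) z / h z := by
  have hnear : ∀ᶠ w in 𝓝 z, AnalyticAt ℂ h w ∧ h w ≠ 0 :=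
    hh.eventually_analyticAt.and (hh.continuousAt.eventually_ne hz)
  have hf₂ : deriv (deriv f) =ᶠ[𝓝 z] fun w => -2 * c * deriv h w / h w ^ 3 := by
    filter_upwards [hf.eventuallyEq_nhds, hnear] with w hfw ⟨hhw, hw⟩
    rw [hfw.deriv_eq]
    refine (((hasDerivAt_const w c).div (hhw.differentiableAt.hasDerivAt.fun_pow 2)
      (pow_ne_zero 2 hw)).congr_deriv ?_).deriv
    field_simp
    ring
  have hf₃ : deriv (deriv (deriv f)) z =
      -2 * c * (deriv (deriv h) z * h z - 3 * deriv h z ^ 2) / h z ^ 4 := by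
    rw [hf₂.deriv_eq]
    refine (((hh.deriv.differentiableAt.hasDerivAt.const_mul (-2 * c)).div
      (hh.differentiableAt.hasDerivAt.fun_pow 3) (pow_ne_zero 3 hz)).congr_deriv ?_).deriv
    field_simp
    ring
  rw [schwarzian, iteratedDeriv_eq_iterate, iteratedDeriv_eq_iterate]
  simp only [Function.iterate_succ_apply, Function.iterate_zero_apply]
  rw [hf₃, hf₂.eq_of_nhds, hf.eq_of_nhds]
  field_simp
  ring

theorem schwarzian_of_solution_quotient_general
    (D : Set ℂ) (hDo : IsOpen D) (hDc : IsConnected D)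
    (Q y₁ y₂ : ℂ → ℂ)
    (hy₁ : AnalyticOnNhd ℂ y₁ D) (hy₂ : AnalyticOnNhd ℂ y₂ D)
    (hode₁ : ∀ z ∈ D, iteratedDeriv 2 y₁ z + Q z * y₁ z = 0)
    (hode₂ : ∀ z ∈ D, iteratedDeriv 2 y₂ z + Q z * y₂ z = 0)
    (hW : ∃ z ∈ D, y₁ z * deriv y₂ z - deriv y₁ z * y₂ z ≠ 0) :
    ∀ z ∈ D, y₂ z ≠ 0 →
      AnalyticAt ℂ (fun w => y₁ w / y₂ w) z ∧
      deriv (fun w => y₁ w / y₂ w) z ≠ 0 ∧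
      schwarzian (fun w => y₁ w / y₂ w) z = 2 * Q z := by
  intro z hz hz₂
  obtain ⟨z₀, hz₀, hWz₀⟩ := hW
  simp only [iteratedDeriv_eq_iterate, Function.iterate_succ_apply,
    Function.iterate_zero_apply] at hode₁ hode₂
  have hWconst : ∀ w ∈ D, wronskian y₁ y₂ w = wronskian y₁ y₂ z₀ := fun w hw =>
    hDo.wronskian_eq_of_ode hDc.isPreconnected hy₁.differentiableOn hy₂.differentiableOn
      hy₁.deriv.differentiableOn hy₂.deriv.differentiableOn hode₁ hode₂ hw hz₀
  have hf : deriv (fun w => y₁ w / y₂ w) =ᶠ[𝓝 z] fun w => -wronskian y₁ y₂ z₀ / y₂ w ^ 2 := by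
    filter_upwards [hDo.mem_nhds hz, (hy₂ z hz).continuousAt.eventually_ne hz₂] with w hw hw₂
    rw [deriv_div_eq_neg_wronskian_div_sq (hy₁ w hw).differentiableAt
      (hy₂ w hw).differentiableAt hw₂, hWconst w hw]
  refine ⟨(hy₁ z hz).div (hy₂ z hz) hz₂, ?_, ?_⟩
  · rw [hf.eq_of_nhds]
    exact div_ne_zero (neg_ne_zero.2 hWz₀) (pow_ne_zero 2 hz₂)
  · rw [schwarzian_eq_of_deriv_eventuallyEq_const_div_sq (hy₂ z hz) hz₂ (neg_ne_zero.2 hWz₀) hf,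
      eq_neg_of_add_eq_zero_left (hode₂ z hz)]
    field_simp

/-- If `y₁, y₂` are linearly independent solutions of `y'' + Q y = 0` on a domain `D`,
then `S(y₁/y₂) = 2Q` wherever `y₂ ≠ 0`. -/
theorem schwarzian_of_solution_quotient
    (D : Set ℂ) (hD : D.Nonempty) (hDo : IsOpen D) (hDc : IsConnected D)
    (Q y₁ y₂ : ℂ → ℂ)
    (hQ : AnalyticOnNhd ℂ Q D)
    (hy₁ : AnalyticOnNhd ℂ y₁ D) (hy₂ : AnalyticOnNhd ℂ y₂ D)
    (hode₁ : ∀ z ∈ D, iteratedDeriv 2 y₁ z + Q z * y₁ z = 0)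
    (hode₂ : ∀ z ∈ D, iteratedDeriv 2 y₂ z + Q z * y₂ z = 0)
    (hW : ∃ z ∈ D, y₁ z * deriv y₂ z - deriv y₁ z * y₂ z ≠ 0) :
    ∀ z ∈ D, y₂ z ≠ 0 →
      AnalyticAt ℂ (fun w => y₁ w / y₂ w) z ∧
      deriv (fun w => y₁ w / y₂ w) z ≠ 0 ∧
      schwarzian (fun w => y₁ w / y₂ w) z = 2 * Q z :=
  schwarzian_of_solution_quotient_general D hDo hDc Q y₁ y₂ hy₁ hy₂ hode₁ hode₂ hW
end

section
/- Let D be a nonempty connected open subset of ℂ, and let f and g be analytic functions on D with f'(z) ≠ 0 and g'(z) ≠ 0 for all z ∈ D. If S(f)(z) = S(g)(z) for all z ∈ D, then there exists a matrix [[a,b],[c,d]] ∈ GL(2,ℂ) such that for all z ∈ D, c g(z) + d ≠ 0 and f(z) = (a g(z) + b)/(c g(z) + d). -/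
/-!
With the pre-Schwarzian `P f = f'' / f'` one has `S f = (P f)' - (P f)² / 2`. So if `S f = S h`
near `z₀`, then `k = P f - P h` solves the linear equation `k' = ((P f + P h) / 2) k`, and an
analytic solution vanishing at `z₀` vanishes near `z₀`: differentiation lowers its order of
vanishing, multiplication by `(P f + P h) / 2` does not. Hence `f = h` near `z₀` as soon as their
2-jets agree at `z₀`. The Schwarzian is invariant under post-composition with Möbius maps, so
taking for `h` the Möbius image `M ∘ g` with the 2-jet of `f` at `z₀` gives `f = M ∘ g` near `z₀`,
and the identity theorem applied to `f (c g + d) - (a g + b)` spreads this over the connected `D`.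
-/

open Filter Topology

section AnalyticOrder

variable {𝕜 E : Type*} [NontriviallyNormedField 𝕜] [CharZero 𝕜] [NormedAddCommGroup E]
  [NormedSpace 𝕜 E] [CompleteSpace E] {f : 𝕜 → E} {x : 𝕜}

theorem AnalyticAt.eventuallyEq_const_of_deriv_eventuallyEq_zero (hf : AnalyticAt 𝕜 f x)
    (hf' : deriv f =ᶠ[𝓝 x] 0) : f =ᶠ[𝓝 x] fun _ ↦ f x := by
  have h : analyticOrderAt (f · - f x) x = ⊤ := by
    rw [← hf.analyticOrderAt_deriv_add_one, analyticOrderAt_eq_top.2 hf', top_add]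
  filter_upwards [analyticOrderAt_eq_top.1 h] with y hy using sub_eq_zero.1 hy

theorem AnalyticAt.eventuallyEq_zero_of_deriv_eventuallyEq_smul {p : 𝕜 → 𝕜}
    (hf : AnalyticAt 𝕜 f x) (hp : AnalyticAt 𝕜 p x) (hode : deriv f =ᶠ[𝓝 x] p • f)
    (hx : f x = 0) : f =ᶠ[𝓝 x] 0 := by
  have hle : analyticOrderAt f x + 1 ≤ analyticOrderAt f x :=
    calc analyticOrderAt f x + 1 ≤ analyticOrderAt p x + analyticOrderAt f x + 1 := by
          gcongr; exact le_add_self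
      _ = analyticOrderAt (deriv f) x + 1 := by
          rw [analyticOrderAt_congr hode, analyticOrderAt_smul hp hf]
      _ = analyticOrderAt f x := by simpa [hx] using hf.analyticOrderAt_deriv_add_one
  refine analyticOrderAt_eq_top.1 (by_contra fun h ↦ ?_)
  exact lt_irrefl _ ((ENat.add_one_le_iff h).1 hle)

end AnalyticOrder

section Schwarzian

variable {f g h : ℂ → ℂ} {z z₀ : ℂ}

noncomputable def preSchwarzian (f : ℂ → ℂ) (z : ℂ) : ℂ := deriv (deriv f) z / deriv f z

theorem AnalyticAt.preSchwarzian (hf : AnalyticAt ℂ f z) (hf' : deriv f z ≠ 0) :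
    AnalyticAt ℂ (preSchwarzian f) z :=
  hf.deriv.deriv.div hf.deriv hf'

theorem schwarzian_eq_deriv_preSchwarzian (hf : AnalyticAt ℂ f z) (hf' : deriv f z ≠ 0) :
    schwarzian f z = deriv (preSchwarzian f) z - preSchwarzian f z ^ 2 / 2 := by
  have hd : deriv (preSchwarzian f) z = (deriv (deriv (deriv f)) z * deriv f z
      - deriv (deriv f) z * deriv (deriv f) z) / deriv f z ^ 2 :=
    deriv_fun_div hf.deriv.deriv.differentiableAt hf.deriv.differentiableAt hf'
  rw [hd, schwarzian, preSchwarzian, iteratedDeriv_succ, iteratedDeriv_succ, iteratedDeriv_one]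
  field_simp
  ring

theorem AnalyticAt.eventually_analyticAt_and_deriv_ne_zero (hf : AnalyticAt ℂ f z)
    (hf' : deriv f z ≠ 0) : ∀ᶠ w in 𝓝 z, AnalyticAt ℂ f w ∧ deriv f w ≠ 0 :=
  hf.eventually_analyticAt.and (hf.deriv.continuousAt.eventually_ne hf')

theorem preSchwarzian_eventuallyEq_of_schwarzian_eventuallyEq (hf : AnalyticAt ℂ f z₀)
    (hh : AnalyticAt ℂ h z₀) (hf' : deriv f z₀ ≠ 0) (hh' : deriv h z₀ ≠ 0)
    (hS : schwarzian f =ᶠ[𝓝 z₀] schwarzian h)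
    (hP₀ : preSchwarzian f z₀ = preSchwarzian h z₀) :
    preSchwarzian f =ᶠ[𝓝 z₀] preSchwarzian h := by
  have hk := (hf.preSchwarzian hf').sub (hh.preSchwarzian hh')
  have hp : AnalyticAt ℂ (fun z ↦ (preSchwarzian f z + preSchwarzian h z) / 2) z₀ :=
    ((hf.preSchwarzian hf').add (hh.preSchwarzian hh')).div_const
  have hode : deriv (preSchwarzian f - preSchwarzian h) =ᶠ[𝓝 z₀]
      (fun z ↦ (preSchwarzian f z + preSchwarzian h z) / 2) •
        (preSchwarzian f - preSchwarzian h) := by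
    filter_upwards [hS, hf.eventually_analyticAt_and_deriv_ne_zero hf',
      hh.eventually_analyticAt_and_deriv_ne_zero hh'] with z hSz ⟨hfz, hfz'⟩ ⟨hhz, hhz'⟩
    rw [schwarzian_eq_deriv_preSchwarzian hfz hfz',
      schwarzian_eq_deriv_preSchwarzian hhz hhz'] at hSz
    rw [deriv_sub (hfz.preSchwarzian hfz').differentiableAt
      (hhz.preSchwarzian hhz').differentiableAt]
    show _ = (preSchwarzian f z + preSchwarzian h z) / 2 *
      (preSchwarzian f z - preSchwarzian h z)
    linear_combination hSz
  filter_upwards [hk.eventuallyEq_zero_of_deriv_eventuallyEq_smul hp hode (sub_eq_zero.2 hP₀)]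
    with z hz using sub_eq_zero.1 hz

theorem eventuallyEq_of_preSchwarzian_eventuallyEq (hf : AnalyticAt ℂ f z₀)
    (hh : AnalyticAt ℂ h z₀) (hf' : deriv f z₀ ≠ 0) (hh' : deriv h z₀ ≠ 0)
    (hP : preSchwarzian f =ᶠ[𝓝 z₀] preSchwarzian h)
    (h₀ : f z₀ = h z₀) (h₁ : deriv f z₀ = deriv h z₀) : f =ᶠ[𝓝 z₀] h := by
  have hreg := (hf.eventually_analyticAt_and_deriv_ne_zero hf').and
    (hh.eventually_analyticAt_and_deriv_ne_zero hh')
  -- `P f = P h` says exactly that `(f' / h')' = 0`.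
  have hq : deriv (fun z ↦ deriv f z / deriv h z) =ᶠ[𝓝 z₀] 0 := by
    filter_upwards [hP, hreg] with z hPz ⟨⟨hfz, hfz'⟩, hhz, hhz'⟩
    rw [deriv_fun_div hfz.deriv.differentiableAt hhz.deriv.differentiableAt hhz']
    simp only [preSchwarzian] at hPz
    field_simp at hPz
    simp only [Pi.zero_apply, div_eq_zero_iff]
    left
    linear_combination hPz
  have hd : deriv (f - h) =ᶠ[𝓝 z₀] 0 := by
    filter_upwards [(hf.deriv.div hh.deriv hh').eventuallyEq_const_of_deriv_eventuallyEq_zero hq,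
      hreg] with z hz ⟨⟨hfz, _⟩, hhz, hhz'⟩
    rw [Pi.div_apply, Pi.div_apply, h₁, div_self hh', div_eq_one_iff_eq hhz'] at hz
    rw [deriv_sub hfz.differentiableAt hhz.differentiableAt, hz, sub_self, Pi.zero_apply]
  filter_upwards [(hf.sub hh).eventuallyEq_const_of_deriv_eventuallyEq_zero hd] with z hz
  rwa [Pi.sub_apply, Pi.sub_apply, h₀, sub_self, sub_eq_zero] at hz

theorem eventuallyEq_of_schwarzian_eventuallyEq (hf : AnalyticAt ℂ f z₀)
    (hh : AnalyticAt ℂ h z₀) (hf' : deriv f z₀ ≠ 0) (hh' : deriv h z₀ ≠ 0)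
    (hS : schwarzian f =ᶠ[𝓝 z₀] schwarzian h) (h₀ : f z₀ = h z₀)
    (h₁ : deriv f z₀ = deriv h z₀) (h₂ : preSchwarzian f z₀ = preSchwarzian h z₀) :
    f =ᶠ[𝓝 z₀] h :=
  eventuallyEq_of_preSchwarzian_eventuallyEq hf hh hf' hh'
    (preSchwarzian_eventuallyEq_of_schwarzian_eventuallyEq hf hh hf' hh' hS h₂) h₀ h₁

end Schwarzian

section Moebius

variable {f g : ℂ → ℂ} {a b c d z z₀ : ℂ}

noncomputable def moebius (a b c d w : ℂ) : ℂ := (a * w + b) / (c * w + d)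

theorem hasDerivAt_moebius {w : ℂ} (hw : c * w + d ≠ 0) :
    HasDerivAt (moebius a b c d) ((a * d - b * c) / (c * w + d) ^ 2) w := by
  have h := (((hasDerivAt_id' w).const_mul a).add_const b).div
    (((hasDerivAt_id' w).const_mul c).add_const d) hw
  exact h.congr_deriv (by ring)

theorem deriv_moebius_comp (hg : DifferentiableAt ℂ g z) (hz : c * g z + d ≠ 0) :
    deriv (fun w ↦ moebius a b c d (g w)) z = (a * d - b * c) * deriv g z / (c * g z + d) ^ 2 :=
  ((hasDerivAt_moebius hz).comp z hg.hasDerivAt).deriv.trans (by ring)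

theorem AnalyticAt.moebius_comp (hg : AnalyticAt ℂ g z) (hz : c * g z + d ≠ 0) :
    AnalyticAt ℂ (fun w ↦ moebius a b c d (g w)) z :=
  ((analyticAt_const.mul hg).add analyticAt_const).div
    ((analyticAt_const.mul hg).add analyticAt_const) hz

theorem preSchwarzian_moebius_comp (hg : AnalyticAt ℂ g z) (hz : c * g z + d ≠ 0)
    (hdet : a * d - b * c ≠ 0) :
    preSchwarzian (fun w ↦ moebius a b c d (g w)) z =
      preSchwarzian g z - 2 * c * deriv g z / (c * g z + d) := by
  have hderiv : deriv (fun w ↦ moebius a b c d (g w)) =ᶠ[𝓝 z]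
      fun w ↦ (a * d - b * c) * deriv g w / (c * g w + d) ^ 2 := by
    filter_upwards [hg.eventually_analyticAt,
      ((hg.continuousAt.const_mul c).add_const d).eventually_ne hz] with w hgw hw
    exact deriv_moebius_comp hgw.differentiableAt hw
  have hden := ((hg.differentiableAt.hasDerivAt.const_mul c).add_const d).pow 2
  have hd2 := (hg.deriv.differentiableAt.hasDerivAt.const_mul (a * d - b * c)).div hden
    (pow_ne_zero 2 hz)
  rw [preSchwarzian, hderiv.deriv_eq.trans hd2.deriv,
    deriv_moebius_comp hg.differentiableAt hz, preSchwarzian, Pi.pow_apply]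
  field_simp
  ring

theorem schwarzian_moebius_comp_eventuallyEq (hg : AnalyticAt ℂ g z) (hg' : deriv g z ≠ 0)
    (hz : c * g z + d ≠ 0) (hdet : a * d - b * c ≠ 0) :
    schwarzian (fun w ↦ moebius a b c d (g w)) =ᶠ[𝓝 z] schwarzian g := by
  have hreg : ∀ᶠ w in 𝓝 z, (AnalyticAt ℂ g w ∧ deriv g w ≠ 0) ∧ c * g w + d ≠ 0 :=
    (hg.eventually_analyticAt_and_deriv_ne_zero hg').and
      (((hg.continuousAt.const_mul c).add_const d).eventually_ne hz)
  filter_upwards [hreg.eventually_nhds] with w hw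
  obtain ⟨⟨hgw, hgw'⟩, hw'⟩ := hw.self_of_nhds
  have hP : preSchwarzian (fun w ↦ moebius a b c d (g w)) =ᶠ[𝓝 w]
      fun y ↦ preSchwarzian g y - 2 * c * deriv g y / (c * g y + d) := by
    filter_upwards [hw] with y ⟨⟨hgy, _⟩, hy⟩ using preSchwarzian_moebius_comp hgy hy hdet
  have hM' : deriv (fun w ↦ moebius a b c d (g w)) w ≠ 0 := by
    rw [deriv_moebius_comp hgw.differentiableAt hw']
    exact div_ne_zero (mul_ne_zero hdet hgw') (pow_ne_zero 2 hw')
  have hdP := (hgw.preSchwarzian hgw').differentiableAt.hasDerivAt.sub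
    ((hgw.deriv.differentiableAt.hasDerivAt.const_mul (2 * c)).div
      ((hgw.differentiableAt.hasDerivAt.const_mul c).add_const d) hw')
  rw [schwarzian_eq_deriv_preSchwarzian (hgw.moebius_comp hw') hM',
    schwarzian_eq_deriv_preSchwarzian hgw hgw', hP.deriv_eq.trans hdP.deriv, hP.eq_of_nhds,
    preSchwarzian]
  field_simp
  ring

/-- Normalising `c g(z) + d = 1`, the three conditions read `ad - bc = w₁ / g'(z)`,
`a g(z) + b = w₀` and `P g(z) - 2c g'(z) = p`. -/
theorem exists_moebius_comp_jet_eq (hg : AnalyticAt ℂ g z) (hg' : deriv g z ≠ 0) {w₀ w₁ p : ℂ}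
    (hw₁ : w₁ ≠ 0) :
    ∃ a b c d : ℂ, a * d - b * c ≠ 0 ∧ c * g z + d ≠ 0 ∧ moebius a b c d (g z) = w₀ ∧
      deriv (fun w ↦ moebius a b c d (g w)) z = w₁ ∧
      preSchwarzian (fun w ↦ moebius a b c d (g w)) z = p := by
  set c := (preSchwarzian g z - p) / (2 * deriv g z)
  set δ := w₁ / deriv g z
  have hden : c * g z + (1 - c * g z) = 1 := by ring
  have hdet : (δ + w₀ * c) * (1 - c * g z) - (w₀ - (δ + w₀ * c) * g z) * c = δ := by ring
  have hdet' : (δ + w₀ * c) * (1 - c * g z) - (w₀ - (δ + w₀ * c) * g z) * c ≠ 0 := by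
    rw [hdet]; exact div_ne_zero hw₁ hg'
  have hden' : c * g z + (1 - c * g z) ≠ 0 := by rw [hden]; exact one_ne_zero
  refine ⟨δ + w₀ * c, w₀ - (δ + w₀ * c) * g z, c, 1 - c * g z, hdet', hden', ?_, ?_, ?_⟩
  · rw [moebius, hden]
    ring
  · rw [deriv_moebius_comp hg.differentiableAt hden', hden, hdet]
    field_simp
    exact div_mul_cancel₀ w₁ hg'
  · rw [preSchwarzian_moebius_comp hg hden' hdet', hden]
    simp only [c]
    field_simp
    ring

theorem AnalyticOnNhd.eqOn_moebius_comp_of_eventuallyEq {D : Set ℂ} (hD : IsPreconnected D)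
    (hf : AnalyticOnNhd ℂ f D) (hg : AnalyticOnNhd ℂ g D) (hdet : a * d - b * c ≠ 0)
    (hz₀ : z₀ ∈ D) (hz₀' : c * g z₀ + d ≠ 0) (hfg : f =ᶠ[𝓝 z₀] fun w ↦ moebius a b c d (g w)) :
    ∀ z ∈ D, c * g z + d ≠ 0 ∧ f z = moebius a b c d (g z) := by
  have hF : AnalyticOnNhd ℂ (fun z ↦ f z * (c * g z + d) - (a * g z + b)) D := fun z hz ↦
    ((hf z hz).mul ((analyticAt_const.mul (hg z hz)).add analyticAt_const)).sub
      ((analyticAt_const.mul (hg z hz)).add analyticAt_const)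
  have hF₀ := hF.eqOn_zero_of_preconnected_of_eventuallyEq_zero hD hz₀ <| by
    filter_upwards [hfg, (((hg z₀ hz₀).continuousAt.const_mul c).add_const d).eventually_ne hz₀']
      with z hz hz'
    rw [hz, moebius, div_mul_cancel₀ _ hz', sub_self, Pi.zero_apply]
  intro z hz
  have hFz : f z * (c * g z + d) = a * g z + b := sub_eq_zero.1 (hF₀ hz)
  have hz' : c * g z + d ≠ 0 := fun h0 ↦ hdet <| by
    linear_combination (a - c * f z) * h0 + c * hFz
  exact ⟨hz', by rw [moebius, eq_div_iff hz', hFz]⟩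

end Moebius

theorem eq_moebius_of_schwarzian_eq_general
    (D : Set ℂ) (hDo : IsOpen D) (hDc : IsConnected D)
    (f g : ℂ → ℂ)
    (hf : AnalyticOnNhd ℂ f D) (hg : AnalyticOnNhd ℂ g D)
    (hf' : ∀ z ∈ D, deriv f z ≠ 0) (hg' : ∀ z ∈ D, deriv g z ≠ 0)
    (hS : ∀ z ∈ D, schwarzian f z = schwarzian g z) :
    ∃ a b c d : ℂ, a * d - b * c ≠ 0 ∧
      ∀ z ∈ D, c * g z + d ≠ 0 ∧ f z = (a * g z + b) / (c * g z + d) := by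
  obtain ⟨z₀, hz₀⟩ := hDc.nonempty
  obtain ⟨a, b, c, d, hdet, hz₀', h₀, h₁, h₂⟩ := exists_moebius_comp_jet_eq (hg z₀ hz₀)
    (hg' z₀ hz₀) (w₀ := f z₀) (p := preSchwarzian f z₀) (hf' z₀ hz₀)
  have hS' : schwarzian f =ᶠ[𝓝 z₀] schwarzian fun w ↦ moebius a b c d (g w) := by
    filter_upwards [hDo.mem_nhds hz₀,
      schwarzian_moebius_comp_eventuallyEq (hg z₀ hz₀) (hg' z₀ hz₀) hz₀' hdet] with z hz hMz
    rw [hS z hz, hMz]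
  have hloc := eventuallyEq_of_schwarzian_eventuallyEq (hf z₀ hz₀)
    ((hg z₀ hz₀).moebius_comp hz₀') (hf' z₀ hz₀)
    (h₁ ▸ hf' z₀ hz₀) hS' h₀.symm h₁.symm h₂.symm
  exact ⟨a, b, c, d, hdet,
    hf.eqOn_moebius_comp_of_eventuallyEq hDc.isPreconnected hg hdet hz₀ hz₀' hloc⟩

/-- Two functions with the same Schwarz derivative on a domain differ by a Möbius
transformation in `GL(2,ℂ)`. -/
theorem eq_moebius_of_schwarzian_eq
    (D : Set ℂ) (hD : D.Nonempty) (hDo : IsOpen D) (hDc : IsConnected D)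
    (f g : ℂ → ℂ)
    (hf : AnalyticOnNhd ℂ f D) (hg : AnalyticOnNhd ℂ g D)
    (hf' : ∀ z ∈ D, deriv f z ≠ 0) (hg' : ∀ z ∈ D, deriv g z ≠ 0)
    (hS : ∀ z ∈ D, schwarzian f z = schwarzian g z) :
    ∃ a b c d : ℂ, a * d - b * c ≠ 0 ∧
      ∀ z ∈ D, c * g z + d ≠ 0 ∧ f z = (a * g z + b) / (c * g z + d) :=
  eq_moebius_of_schwarzian_eq_general D hDo hDc f g hf hg hf' hg' hS
end

section
/- Let D be a nonempty connected open subset of ℂ and let h be meromorphic on D and not constant. Then there exists a function s meromorphic on D such that s(z) = S(h)(z) for every z ∈ D at which h is analytic and h'(z) ≠ 0, and the pole order of s at every point of D is at most 2 (i.e., the meromorphic order of s at each point of D is at least −2). -/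
/-!
Writing `g = h''/h'` for the logarithmic derivative of `h'`, the Schwarzian is
`S(h) = g' - g²/2`. The logarithmic derivative of a meromorphic function has at worst a simple
pole, so `g'` and `g²` have at worst double poles, and `g' - g²/2` is the required meromorphic
extension of `S(h)`.
-/

open Filter Topology

section MeromorphicOrder

variable {𝕜 : Type*} [NontriviallyNormedField 𝕜] [CharZero 𝕜] {x : 𝕜}

theorem le_meromorphicOrderAt_deriv {E : Type*} [NormedAddCommGroup E] [NormedSpace 𝕜 E]
    [CompleteSpace E] {f : 𝕜 → E} {n : ℤ} (hf : MeromorphicAt f x)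
    (hn : (n : WithTop ℤ) ≤ meromorphicOrderAt f x) :
    ((n - 1 : ℤ) : WithTop ℤ) ≤ meromorphicOrderAt (deriv f) x := by
  cases hm : meromorphicOrderAt f x with
  | top =>
    have hf0 : f =ᶠ[𝓝[≠] x] 0 := meromorphicOrderAt_eq_top_iff.1 hm
    have hderiv : deriv f =ᶠ[𝓝[≠] x] 0 := by simpa using hf0.nhdsNE_deriv
    simp [meromorphicOrderAt_eq_top_iff.2 hderiv]
  | coe m =>
    rw [hm, WithTop.coe_le_coe] at hn
    rcases eq_or_ne m 0 with rfl | hm0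
    · obtain ⟨g, hg, -, hfg⟩ := (meromorphicOrderAt_eq_int_iff hf).1 hm
      have hfg : f =ᶠ[𝓝[≠] x] g := hfg.mono fun z hz ↦ by simpa using hz
      rw [meromorphicOrderAt_congr hfg.nhdsNE_deriv]
      exact le_trans (by exact_mod_cast (by omega : n - 1 ≤ 0)) hg.deriv.meromorphicOrderAt_nonneg
    · rw [meromorphicOrderAt_deriv_eq_sub_one (Int.cast_ne_zero.2 hm0) hm]
      exact_mod_cast (by omega : n - 1 ≤ m - 1)

variable [CompleteSpace 𝕜]

theorem neg_one_le_meromorphicOrderAt_logDeriv {f : 𝕜 → 𝕜} (hf : MeromorphicAt f x) :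
    ((-1 : ℤ) : WithTop ℤ) ≤ meromorphicOrderAt (logDeriv f) x := by
  by_cases htop : meromorphicOrderAt f x = ⊤
  · have hf0 : f =ᶠ[𝓝[≠] x] 0 := meromorphicOrderAt_eq_top_iff.1 htop
    -- `f' / f` vanishes near `x` by the convention `a / 0 = 0`.
    have hlog : logDeriv f =ᶠ[𝓝[≠] x] 0 :=
      (logDeriv_congr_nhdsNE hf0).trans (.of_eq (by ext; simp [logDeriv_apply]))
    simp [meromorphicOrderAt_eq_top_iff.2 hlog]
  by_cases hzero : meromorphicOrderAt f x = 0
  · exact le_trans (by decide) (meromorphicOrderAt_logDeriv_nonneg hf hzero)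
  · exact (meromorphicOrderAt_logDeriv_eq_neg_one hf hzero htop).ge

theorem neg_two_le_meromorphicOrderAt_deriv_sub_sq {g : 𝕜 → 𝕜} (hg : MeromorphicAt g x)
    (hg₁ : ((-1 : ℤ) : WithTop ℤ) ≤ meromorphicOrderAt g x) :
    ((-2 : ℤ) : WithTop ℤ) ≤ meromorphicOrderAt (deriv g - g ^ 2 / 2) x := by
  have hsplit : deriv g - g ^ 2 / 2 = deriv g + (fun _ ↦ -2⁻¹) * g ^ 2 := by
    ext z
    simp only [Pi.sub_apply, Pi.add_apply, Pi.mul_apply, Pi.div_apply, Pi.pow_apply,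
      Pi.ofNat_apply]
    ring
  have hderiv : ((-2 : ℤ) : WithTop ℤ) ≤ meromorphicOrderAt (deriv g) x :=
    le_meromorphicOrderAt_deriv hg hg₁
  have hsq : ((-2 : ℤ) : WithTop ℤ) ≤ meromorphicOrderAt ((fun _ ↦ -2⁻¹) * g ^ 2) x := by
    rw [meromorphicOrderAt_mul_of_ne_zero analyticAt_const (by norm_num),
      meromorphicOrderAt_pow hg]
    rcases eq_or_ne (meromorphicOrderAt g x) ⊤ with htop | htop
    · simp [htop]
    lift meromorphicOrderAt g x to ℤ using htop with m
    have hm : -1 ≤ m := by exact_mod_cast hg₁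
    calc ((-2 : ℤ) : WithTop ℤ) ≤ ((2 * m : ℤ) : WithTop ℤ) := WithTop.coe_le_coe.2 (by omega)
      _ = 2 * m := by push_cast; rfl
  rw [hsplit]
  exact le_trans (le_min hderiv hsq) (meromorphicOrderAt_add hg.deriv (by fun_prop))

end MeromorphicOrder

theorem schwarzian_eq_deriv_logDeriv_sub {f : ℂ → ℂ} {z : ℂ} (hf : AnalyticAt ℂ f z)
    (hf' : deriv f z ≠ 0) :
    schwarzian f z = deriv (logDeriv (deriv f)) z - logDeriv (deriv f) z ^ 2 / 2 := by
  have hf₁ : AnalyticAt ℂ (deriv f) z := hf.deriv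
  have hquot : deriv (logDeriv (deriv f)) z =
      (deriv (deriv (deriv f)) z * deriv f z - deriv (deriv f) z * deriv (deriv f) z) /
        deriv f z ^ 2 :=
    deriv_div hf₁.deriv.differentiableAt hf₁.differentiableAt hf'
  rw [schwarzian, hquot, logDeriv_apply, iteratedDeriv_eq_iterate, iteratedDeriv_eq_iterate]
  simp only [Function.iterate_succ, Function.iterate_zero, Function.comp_apply, id_eq]
  field_simp
  ring

theorem schwarzian_meromorphic_with_at_most_double_poles_general
    (D : Set ℂ) (h : ℂ → ℂ) (hmero : MeromorphicOn h D) :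
    ∃ s : ℂ → ℂ, ∃ hs : MeromorphicOn s D,
      (∀ z ∈ D, AnalyticAt ℂ h z → deriv h z ≠ 0 → s z = schwarzian h z) ∧
      ∀ z : ℂ, ∀ hz : z ∈ D, ((-2 : ℤ) : WithTop ℤ) ≤ meromorphicOrderAt s z := by
  set g := logDeriv (deriv h)
  have hg : MeromorphicOn g D := hmero.deriv.logDeriv
  refine ⟨deriv g - g ^ 2 / 2, hg.deriv.sub ((hg.pow 2).div (MeromorphicOn.const 2)),
    fun z _ hhz hh'z ↦ (schwarzian_eq_deriv_logDeriv_sub hhz hh'z).symm,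
    fun z hz ↦ neg_two_le_meromorphicOrderAt_deriv_sub_sq (hg z hz)
      (neg_one_le_meromorphicOrderAt_logDeriv (hmero z hz).deriv)⟩

/-- The Schwarz derivative of a nonconstant meromorphic function extends to a meromorphic
function whose poles all have order at most 2. -/
theorem schwarzian_meromorphic_with_at_most_double_poles
    (D : Set ℂ) (hD : D.Nonempty) (hDo : IsOpen D) (hDc : IsConnected D)
    (h : ℂ → ℂ) (hmero : MeromorphicOn h D)
    (hnc : ¬ ∃ c : ℂ, ∀ z ∈ D, AnalyticAt ℂ h z → h z = c) :
    ∃ s : ℂ → ℂ, ∃ hs : MeromorphicOn s D,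
      (∀ z ∈ D, AnalyticAt ℂ h z → deriv h z ≠ 0 → s z = schwarzian h z) ∧
      ∀ z : ℂ, ∀ hz : z ∈ D, ((-2 : ℤ) : WithTop ℤ) ≤ meromorphicOrderAt s z :=
  schwarzian_meromorphic_with_at_most_double_poles_general D h hmero
end

section
/- Let D be a nonempty connected open subset of ℂ, let h be an analytic function on D that is not constant, and let α = [[a,b],[c,d]] and β = [[a',b'],[c',d']] be matrices in GL(2,ℂ) such that for all z ∈ D one has c h(z) + d ≠ 0, c' h(z) + d' ≠ 0, and (a h(z) + b)/(c h(z) + d) = (a' h(z) + b')/(c' h(z) + d'). Then α and β are projectively equal: there exists λ ∈ ℂ∖{0} with α = λ β. -/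
/-- Rigidity: two Möbius transformations in `GL(2,ℂ)` that agree on the image of a
nonconstant analytic function are projectively equal. -/
theorem moebius_rigidity
    (D : Set ℂ) (hD : D.Nonempty) (hDo : IsOpen D) (hDc : IsConnected D)
    (h : ℂ → ℂ) (hh : AnalyticOnNhd ℂ h D)
    (hnc : ¬ ∃ c : ℂ, ∀ z ∈ D, h z = c)
    (a b c d a' b' c' d' : ℂ)
    (hdet : a * d - b * c ≠ 0) (hdet' : a' * d' - b' * c' ≠ 0)
    (hden : ∀ z ∈ D, c * h z + d ≠ 0) (hden' : ∀ z ∈ D, c' * h z + d' ≠ 0)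
    (heq : ∀ z ∈ D, (a * h z + b) / (c * h z + d) = (a' * h z + b') / (c' * h z + d')) :
    ∃ lam : ℂ, lam ≠ 0 ∧ a = lam * a' ∧ b = lam * b' ∧ c = lam * c' ∧ d = lam * d' := by
  -- The image of h is open (open mapping theorem) and nonempty, hence infinite.
  have himg : IsOpen (h '' D) := by
    rcases hh.is_constant_or_isOpen hDc.isPreconnected with ⟨w, hw⟩ | hopen
    · exact absurd ⟨w, hw⟩ hnc
    · exact hopen D le_rfl hDo
  obtain ⟨z₀, hz₀⟩ := hD
  have hinf : (h '' D).Infinite :=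
    infinite_of_mem_nhds (h z₀) (himg.mem_nhds ⟨z₀, hz₀, rfl⟩)
  -- The quadratic polynomial vanishing on the image.
  have hroot : ∀ w ∈ h '' D,
      (a * c' - a' * c) * w ^ 2 + (a * d' + b * c' - a' * d - b' * c) * w
        + (b * d' - b' * d) = 0 := by
    rintro w ⟨z, hz, rfl⟩
    have h1 := hden z hz
    have h2 := hden' z hz
    have h3 := (div_eq_div_iff h1 h2).mp (heq z hz)
    linear_combination h3
  have hp : (Polynomial.C (a * c' - a' * c) * Polynomial.X ^ 2
      + Polynomial.C (a * d' + b * c' - a' * d - b' * c) * Polynomial.X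
      + Polynomial.C (b * d' - b' * d) : Polynomial ℂ) = 0 := by
    apply Polynomial.eq_zero_of_infinite_isRoot
    apply hinf.mono
    intro w hw
    simpa [Polynomial.IsRoot] using hroot w hw
  have hcoeff : ∀ n, ((Polynomial.C (a * c' - a' * c) * Polynomial.X ^ 2
      + Polynomial.C (a * d' + b * c' - a' * d - b' * c) * Polynomial.X
      + Polynomial.C (b * d' - b' * d) : Polynomial ℂ)).coeff n = 0 := by
    intro n; rw [hp, Polynomial.coeff_zero]
  have hA0 : a * c' - a' * c = 0 := by
    have := hcoeff 2
    simp only [Polynomial.coeff_add, Polynomial.coeff_C_mul, Polynomial.coeff_X_pow,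
      Polynomial.coeff_X, Polynomial.coeff_C] at this
    norm_num at this
    exact this
  have hB0 : a * d' + b * c' - a' * d - b' * c = 0 := by
    have := hcoeff 1
    simp only [Polynomial.coeff_add, Polynomial.coeff_C_mul, Polynomial.coeff_X_pow,
      Polynomial.coeff_X, Polynomial.coeff_C] at this
    norm_num at this
    exact this
  have hC0 : b * d' - b' * d = 0 := by
    have := hcoeff 0
    simp only [Polynomial.coeff_add, Polynomial.coeff_C_mul, Polynomial.coeff_X_pow,
      Polynomial.coeff_X, Polynomial.coeff_C] at this
    norm_num at this
    exact this
  -- Algebra: deduce projective equality.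
  by_cases hc' : c' = 0
  · -- then `c = 0` too, use `lam = d / d'`
    have hd' : d' ≠ 0 := fun h0 => hdet' (by rw [hc', h0]; ring)
    have ha' : a' ≠ 0 := fun h0 => hdet' (by rw [hc', h0]; ring)
    have hc0 : c = 0 := by
      have : a' * c = 0 := by linear_combination a * hc' - hA0
      exact (mul_eq_zero.mp this).resolve_left ha'
    have hd : d ≠ 0 := fun h0 => hdet (by rw [hc0, h0]; ring)
    obtain ⟨lam, hlam⟩ : ∃ lam : ℂ, lam = d / d' := ⟨_, rfl⟩
    have hld : lam * d' = d := by rw [hlam]; field_simp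
    have hlam0 : lam ≠ 0 := fun h0 => hd (by rw [← hld, h0, zero_mul])
    have had : a * d' = a' * d := by linear_combination hB0 - b * hc' + b' * hc0
    have hla : (a - lam * a') * d' = 0 := by linear_combination had - a' * hld
    have hlb : (b - lam * b') * d' = 0 := by linear_combination hC0 - b' * hld
    exact ⟨lam, hlam0,
      by linear_combination (mul_eq_zero.mp hla).resolve_right hd',
      by linear_combination (mul_eq_zero.mp hlb).resolve_right hd',
      by rw [hc0, hc']; ring,
      by linear_combination -hld⟩
  · -- `c' ≠ 0`, then `c ≠ 0`, use `lam = c / c'`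
    have hc0 : c ≠ 0 := by
      intro hc0
      have ha0 : a = 0 := by
        have : a * c' = 0 := by linear_combination hA0 + a' * hc0
        exact (mul_eq_zero.mp this).resolve_right hc'
      exact hdet (by rw [ha0, hc0]; ring)
    obtain ⟨lam, hlam⟩ : ∃ lam : ℂ, lam = c / c' := ⟨_, rfl⟩
    have hlc : lam * c' = c := by rw [hlam]; field_simp
    have hlam0 : lam ≠ 0 := fun h0 => hc0 (by rw [← hlc, h0, zero_mul])
    have hla' : (a - lam * a') * c' = 0 := by linear_combination hA0 - a' * hlc
    have hla : a = lam * a' := by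
      linear_combination (mul_eq_zero.mp hla').resolve_right hc'
    have key1 : c' * (b - lam * b') = a' * (d - lam * d') := by
      linear_combination hB0 - d' * hla - b' * hlc
    have key2 : d' * (b - lam * b') = b' * (d - lam * d') := by
      linear_combination hC0
    have hu : b - lam * b' = 0 := by
      have : (a' * d' - b' * c') * (b - lam * b') = 0 := by
        linear_combination a' * key2 - b' * key1
      exact (mul_eq_zero.mp this).resolve_left hdet'
    have hv : d - lam * d' = 0 := by
      have : (a' * d' - b' * c') * (d - lam * d') = 0 := by
        linear_combination c' * key2 - d' * key1
      exact (mul_eq_zero.mp this).resolve_left hdet'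
    exact ⟨lam, hlam0, hla, by linear_combination hu,
      by linear_combination -hlc, by linear_combination hv⟩
end
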